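/- arXiv:math/0007137 — 4 statements merged into one kernel-verified Lean document; each statement's English description precedes it below -/
import Mathlib

section
/- For quadratic modules (V, Q₁) and (U, Q₂) over a commutative ring k, the Clifford algebra of the orthogonal direct sum (V ⊕ U, Q₁ ⊥ Q₂) is isomorphic as a ℤ₂-graded algebra to the graded tensor product of the Clifford algebras: Cℓ(V ⊕ U, Q₁ ⊥ Q₂) ≅ Cℓ(V, Q₁) ⊗̂ Cℓ(U, Q₂). -/
open TensorProduct CliffordAlgebra

/-- The Clifford algebra of an orthogonal direct sum `(V ⊕ U, Q₁ ⊥ Q₂)` is isomorphic,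
as a ℤ₂-graded algebra, to the graded (super) tensor product of the Clifford algebras:
there is an algebra isomorphism to `Cℓ(V,Q₁) ᵍ⊗ Cℓ(U,Q₂)` sending a generating vector
`(v, u)` to `ι Q₁ v ⊗̂ 1 + 1 ⊗̂ ι Q₂ u`. -/
theorem stmt_6 {k V U : Type*} [CommRing k]
    [AddCommGroup V] [Module k V] [AddCommGroup U] [Module k U]
    (Q₁ : QuadraticForm k V) (Q₂ : QuadraticForm k U) :
    ∃ f : CliffordAlgebra (Q₁.prod Q₂) ≃ₐ[k] (evenOdd Q₁ ᵍ⊗[k] evenOdd Q₂),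
      ∀ (v : V) (u : U),
        f (CliffordAlgebra.ι (Q₁.prod Q₂) (v, u)) =
          CliffordAlgebra.ι Q₁ v ᵍ⊗ₜ[k] 1 + 1 ᵍ⊗ₜ[k] CliffordAlgebra.ι Q₂ u := by
  exact ⟨CliffordAlgebra.prodEquiv Q₁ Q₂, fun v u => CliffordAlgebra.ofProd_ι_mk Q₁ Q₂ v u⟩
end

section
/- Let B be a bilinear form on V over a commutative ring k. Define γ_x := i_x + (x ∧ ·) : ⋀V → ⋀V, where i_x is the B-contraction and x ∧ · is left exterior multiplication. Then γ_x ∘ γ_x = B(x,x) · id for all x ∈ V, so γ is a Clifford map of the quadratic form Q(x) = B(x,x), and hence induces an algebra morphism from CliffordAlgebra Q to End(⋀V). -/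
/-- The `B`-contraction `i_x` on the exterior algebra `⋀V`: the odd derivation with
`i_x y = B(x,y)` for `y ∈ V` (realized as `contractLeft` by the dual vector `B x`). -/
noncomputable def contrB {k V : Type*} [CommRing k] [AddCommGroup V] [Module k V]
    (B : LinearMap.BilinForm k V) (x : V) :
    ExteriorAlgebra k V →ₗ[k] ExteriorAlgebra k V :=
  CliffordAlgebra.contractLeft (Q := (0 : QuadraticForm k V)) (B x)

/-- The Chevalley operator `γ_x := i_x + (x ∧ ·)` on `⋀V`. -/
noncomputable def gammaB {k V : Type*} [CommRing k] [AddCommGroup V] [Module k V]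
    (B : LinearMap.BilinForm k V) (x : V) : Module.End k (ExteriorAlgebra k V) :=
  contrB B x + LinearMap.mulLeft k (ExteriorAlgebra.ι k x)

lemma gamma_sq {k V : Type*} [CommRing k] [AddCommGroup V] [Module k V]
    (B : LinearMap.BilinForm k V) (x : V) (u : ExteriorAlgebra k V) :
    gammaB B x (gammaB B x u) = B x x • u := by
  simp only [gammaB, LinearMap.add_apply, LinearMap.mulLeft_apply, map_add, contrB]
  rw [CliffordAlgebra.contractLeft_contractLeft, CliffordAlgebra.contractLeft_ι_mul,
    ← mul_assoc, ExteriorAlgebra.ι_sq_zero, zero_mul]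
  abel

/-- `γ_x ∘ γ_x = B(x,x) · id`, so `γ` is a Clifford map for the quadratic form
`Q(x) = B(x,x)`, and hence induces an algebra morphism
`CliffordAlgebra Q → End(⋀V)` sending `ι Q x` to `γ_x`. -/
theorem stmt_11 {k V : Type*} [CommRing k] [AddCommGroup V] [Module k V]
    (B : LinearMap.BilinForm k V) :
    (∀ (x : V) (u : ExteriorAlgebra k V), gammaB B x (gammaB B x u) = B x x • u) ∧
    ∃ F : CliffordAlgebra (LinearMap.BilinMap.toQuadraticMap B) →ₐ[k]
        Module.End k (ExteriorAlgebra k V),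
      ∀ x : V, F (CliffordAlgebra.ι (LinearMap.BilinMap.toQuadraticMap B) x) =
        gammaB B x := by
  refine ⟨gamma_sq B, ?_⟩
  have hγ : ∀ x : V,
      gammaB B x * gammaB B x =
        algebraMap k (Module.End k (ExteriorAlgebra k V))
          ((LinearMap.BilinMap.toQuadraticMap B) x) := by
    intro x
    ext u
    simp [Module.End.mul_apply, gamma_sq, LinearMap.BilinMap.toQuadraticMap_apply,
      Module.algebraMap_end_apply]
  have hadd : ∀ a b : V, gammaB B (a + b) = gammaB B a + gammaB B b := ?_
  have hsmul : ∀ (c : k) (a : V), gammaB B (c • a) = c • gammaB B a := ?_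
  refine ⟨CliffordAlgebra.lift _
    ⟨{ toFun := fun x => gammaB B x
       map_add' := hadd
       map_smul' := hsmul }, hγ⟩, fun x => ?_⟩
  · rw [CliffordAlgebra.lift_ι_apply]
    rfl
  · intro c a
    refine LinearMap.ext fun u => ?_
    simp only [gammaB, contrB, map_smul, LinearMap.smul_apply, LinearMap.add_apply,
      LinearMap.mulLeft_apply, smul_add, smul_mul_assoc]
  · intro a b
    refine LinearMap.ext fun u => ?_
    simp only [gammaB, contrB, map_add, LinearMap.add_apply, LinearMap.mulLeft_apply]
    rw [add_mul]
    abel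
end

section
/- The Chevalley map γ : CliffordAlgebra Q → End(⋀V) composed with evaluation at 1 ∈ ⋀V gives a k-linear isomorphism CliffordAlgebra Q ≅ ⋀V (the symbol map is bijective), provided V is a finite-dimensional vector space over a field of characteristic ≠ 2. -/
/-- Over a field of characteristic ≠ 2 and `V` finite dimensional, the Chevalley
representation `γ : CliffordAlgebra Q → End(⋀V)` (determined by `γ(ι Q x) = i_x + x∧`,
for a bilinear form `B` with `B(x,x) = Q(x)`, e.g. half the polar form of `Q`)
composed with evaluation at `1 ∈ ⋀V` is a linear bijection
`CliffordAlgebra Q ≅ ⋀V` (the symbol map is bijective). -/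
theorem stmt_12 {k V : Type*} [Field k] (h2 : (2 : k) ≠ 0)
    [AddCommGroup V] [Module k V] [FiniteDimensional k V]
    (Q : QuadraticForm k V) (B : LinearMap.BilinForm k V) (hB : ∀ x : V, B x x = Q x)
    (F : CliffordAlgebra Q →ₐ[k] Module.End k (ExteriorAlgebra k V))
    (hF : ∀ x : V, F (CliffordAlgebra.ι Q x) = gammaB B x) :
    Function.Bijective (fun a : CliffordAlgebra Q => F a (1 : ExteriorAlgebra k V)) := by
  have h : (-B).toQuadraticMap = (0 : QuadraticForm k V) - Q := by
    ext x
    simp [LinearMap.BilinMap.toQuadraticMap_apply, hB]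
  have key : ∀ a : CliffordAlgebra Q,
      F a (1 : ExteriorAlgebra k V) = CliffordAlgebra.changeForm h a := by
    intro a
    induction a using CliffordAlgebra.left_induction with
    | algebraMap r =>
      simp [CliffordAlgebra.changeForm_algebraMap, Algebra.algebraMap_eq_smul_one]
    | add x y hx hy => simp [map_add, hx, hy]
    | ι_mul x m hx =>
      rw [map_mul, hF]
      show gammaB B m (F x 1) = _
      rw [hx]
      rw [CliffordAlgebra.changeForm_ι_mul]
      simp only [gammaB, contrB, ExteriorAlgebra.ι, LinearMap.add_apply,
        LinearMap.mulLeft_apply, LinearMap.neg_apply, map_neg, sub_neg_eq_add]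
      abel
  have : (fun a : CliffordAlgebra Q => F a (1 : ExteriorAlgebra k V))
      = ⇑(CliffordAlgebra.changeFormEquiv h) := funext fun a => key a
  rw [this]
  exact (CliffordAlgebra.changeFormEquiv h).bijective
end

section
/- Let B₁ and B₂ be two bilinear forms on V over a field k of characteristic ≠ 2 with the same quadratic part, i.e., B₁(x,x) = B₂(x,x) for all x ∈ V, so they differ by an alternating form A = B₂ − B₁. Then the Clifford algebras Cℓ(V, B₁) and Cℓ(V, B₂), realized via the Chevalley maps γ^{B₁} and γ^{B₂} inside End(⋀V), are isomorphic as ℤ₂-graded algebras via a (Wick) isomorphism φ that is the identity on scalars and satisfies φ(γ^{B₁}_x) = γ^{B₂}_x for x ∈ V. -/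
/-- `Cℓ(V,B)`: the subalgebra of `End(⋀V)` generated by the `γ^B_x`, `x ∈ V`. -/
noncomputable def ClB {k V : Type*} [CommRing k] [AddCommGroup V] [Module k V]
    (B : LinearMap.BilinForm k V) : Subalgebra k (Module.End k (ExteriorAlgebra k V)) :=
  Algebra.adjoin k (Set.range (gammaB B))

section aux
variable {k V : Type*} [CommRing k] [AddCommGroup V] [Module k V]
variable (B : LinearMap.BilinForm k V)

theorem gammaB_apply (x : V) (y : ExteriorAlgebra k V) :
    gammaB B x y = CliffordAlgebra.contractLeft (Q := (0 : QuadraticForm k V)) (B x) y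
      + CliffordAlgebra.ι (0 : QuadraticForm k V) x * y := rfl

theorem gammaB_sq (x : V) :
    gammaB B x * gammaB B x = algebraMap k (Module.End k (ExteriorAlgebra k V)) (B x x) := by
  refine LinearMap.ext fun y => ?_
  rw [Module.End.mul_apply, Module.algebraMap_end_apply, gammaB_apply, gammaB_apply, map_add,
    CliffordAlgebra.contractLeft_contractLeft, CliffordAlgebra.contractLeft_ι_mul, mul_add,
    ← mul_assoc, CliffordAlgebra.ι_sq_scalar]
  simp

/-- `gammaB B` as a linear map in `x`. -/
noncomputable def gammaBₗ : V →ₗ[k] Module.End k (ExteriorAlgebra k V) where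
  toFun := gammaB B
  map_add' a b := by
    refine LinearMap.ext fun y => ?_
    simp only [gammaB_apply, map_add, LinearMap.add_apply, map_add, add_mul]
    abel
  map_smul' c a := by
    refine LinearMap.ext fun y => ?_
    simp only [gammaB_apply, map_smul, LinearMap.smul_apply, RingHom.id_apply, smul_mul_assoc,
      LinearMap.map_smul, smul_add]

variable (Q : QuadraticForm k V) (hBQ : ∀ x, B x x = Q x)
include hBQ

noncomputable def liftG : CliffordAlgebra Q →ₐ[k] Module.End k (ExteriorAlgebra k V) :=
  CliffordAlgebra.lift Q ⟨gammaBₗ B, fun x => by rw [← hBQ]; exact gammaB_sq B x⟩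

@[simp] theorem liftG_ι (x : V) : liftG B Q hBQ (CliffordAlgebra.ι Q x) = gammaB B x :=
  CliffordAlgebra.lift_ι_apply _ _ _

theorem negB_proof : (-B).toQuadraticMap = (0 : QuadraticForm k V) - Q := by
  ext x
  simp [LinearMap.BilinMap.toQuadraticMap_apply, ← hBQ x]

theorem liftG_apply_one (c : CliffordAlgebra Q) :
    liftG B Q hBQ c (1 : ExteriorAlgebra k V) = CliffordAlgebra.changeForm (negB_proof B Q hBQ) c := by
  induction c using CliffordAlgebra.left_induction with
  | algebraMap r =>
      rw [AlgHom.commutes, CliffordAlgebra.changeForm_algebraMap, Module.algebraMap_end_apply,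
        Algebra.algebraMap_eq_smul_one]
  | add x y hx hy => rw [map_add, map_add, LinearMap.add_apply, hx, hy]
  | ι_mul m c hc =>
      rw [map_mul, liftG_ι, Module.End.mul_apply, hc, CliffordAlgebra.changeForm_ι_mul,
        gammaB_apply]
      simp only [LinearMap.neg_apply, map_neg, LinearMap.neg_apply]
      abel

theorem liftG_injective : Function.Injective (liftG B Q hBQ) := by
  have hinj : Function.Injective (CliffordAlgebra.changeForm (negB_proof B Q hBQ)) :=
    (CliffordAlgebra.changeFormEquiv (negB_proof B Q hBQ)).injective
  intro a b hab
  apply hinj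
  rw [← liftG_apply_one B Q hBQ, ← liftG_apply_one B Q hBQ, hab]

theorem liftG_range : (liftG B Q hBQ).range = ClB B := by
  apply le_antisymm
  · rintro _ ⟨c, rfl⟩
    show liftG B Q hBQ c ∈ ClB B
    induction c using CliffordAlgebra.induction with
    | algebraMap r => rw [AlgHom.commutes]; exact (ClB B).algebraMap_mem r
    | ι x => rw [liftG_ι]; exact Algebra.subset_adjoin (Set.mem_range_self x)
    | mul a b ha hb => rw [map_mul]; exact mul_mem ha hb
    | add a b ha hb => rw [map_add]; exact add_mem ha hb
  · apply Algebra.adjoin_le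
    rintro _ ⟨x, rfl⟩
    exact ⟨CliffordAlgebra.ι Q x, liftG_ι B Q hBQ x⟩

/-- The isomorphism `CliffordAlgebra Q ≃ₐ ClB B`. -/
noncomputable def eB : CliffordAlgebra Q ≃ₐ[k] ClB B :=
  (AlgEquiv.ofInjective _ (liftG_injective B Q hBQ)).trans
    (Subalgebra.equivOfEq _ _ (liftG_range B Q hBQ))

theorem eB_ι (x : V) :
    eB B Q hBQ (CliffordAlgebra.ι Q x) = ⟨gammaB B x, Algebra.subset_adjoin (Set.mem_range_self x)⟩ := by
  exact Subtype.ext (liftG_ι B Q hBQ x)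

end aux

/-- If two bilinear forms `B₁, B₂` on `V` (char k ≠ 2, `V` finite dimensional) have the
same quadratic part `B₁(x,x) = B₂(x,x)`, then the Clifford algebras `Cℓ(V,B₁)` and
`Cℓ(V,B₂)` realized inside `End(⋀V)` via the Chevalley maps are isomorphic via a
(Wick) algebra isomorphism `φ` (in particular the identity on scalars) with
`φ(γ^{B₁}_x) = γ^{B₂}_x` for all `x ∈ V` — a ℤ₂-graded isomorphism, since it matches
the odd generators. -/
theorem stmt_13 {k V : Type*} [Field k] (h2 : (2 : k) ≠ 0)
    [AddCommGroup V] [Module k V] [FiniteDimensional k V]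
    (B₁ B₂ : LinearMap.BilinForm k V) (hQ : ∀ x : V, B₁ x x = B₂ x x) :
    ∃ φ : ClB B₁ ≃ₐ[k] ClB B₂,
      ∀ x : V,
        (φ ⟨gammaB B₁ x, Algebra.subset_adjoin (Set.mem_range_self x)⟩ :
          Module.End k (ExteriorAlgebra k V)) = gammaB B₂ x := by
  set Q : QuadraticForm k V := B₁.toQuadraticMap with hQdef
  have h₁ : ∀ x, B₁ x x = Q x := fun x => rfl
  have h₂ : ∀ x, B₂ x x = Q x := fun x => (hQ x).symm
  refine ⟨(eB B₁ Q h₁).symm.trans (eB B₂ Q h₂), fun x => ?_⟩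
  have : (eB B₁ Q h₁).symm ⟨gammaB B₁ x, Algebra.subset_adjoin (Set.mem_range_self x)⟩
      = CliffordAlgebra.ι Q x := by
    rw [AlgEquiv.symm_apply_eq, eB_ι]
  rw [AlgEquiv.trans_apply, this, eB_ι]
end
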